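/- For every complex s not equal to any -2^{-j}, ∑_{j≥0} 2^j s / ((s+1)(2s+1)⋯(2^j s+1)) = 1. -/

import Mathlib

/-! With `P n = ∏ i < n, (a i + 1)`, the `n`-th term `a n / P (n + 1)` equals `1 / P n - 1 / P (n + 1)`.
When `a n → ∞` the ratios `‖P n / P (n + 1)‖ = 1 / ‖a n + 1‖` tend to `0`, so `1 / P n` is summable and the
series telescopes to `1 / P 0 = 1`. For the theorem, `a n = 2 ^ n * s`. -/

open Filter Finset Bornology Topology

theorem Summable.hasSum_sub_succ {G : Type*} [AddCommGroup G] [TopologicalSpace G]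
    [IsTopologicalAddGroup G] {f : ℕ → G} (hf : Summable f) :
    HasSum (fun n ↦ f n - f (n + 1)) (f 0) := by
  simpa using hf.hasSum.sub ((hasSum_nat_add_iff' 1).2 hf.hasSum)

section

variable {𝕜 : Type*} [NormedField 𝕜]

theorem div_prod_range_succ_add_one_eq_inv_sub_inv {a : ℕ → 𝕜} (ha : ∀ i, a i + 1 ≠ 0) (n : ℕ) :
    a n / ∏ i ∈ range (n + 1), (a i + 1) =
      (∏ i ∈ range n, (a i + 1))⁻¹ - (∏ i ∈ range (n + 1), (a i + 1))⁻¹ := by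
  have hP : ∏ i ∈ range n, (a i + 1) ≠ 0 := prod_ne_zero_iff.2 fun i _ ↦ ha i
  rw [prod_range_succ]
  field_simp [ha n]
  ring

theorem summable_inv_prod_range_add_one [CompleteSpace 𝕜] {a : ℕ → 𝕜} (ha : ∀ i, a i + 1 ≠ 0)
    (h : Tendsto a atTop (cobounded 𝕜)) :
    Summable fun n ↦ (∏ i ∈ range n, (a i + 1))⁻¹ := by
  refine summable_of_ratio_test_tendsto_lt_one zero_lt_one
    (.of_forall fun n ↦ inv_ne_zero (prod_ne_zero_iff.2 fun i _ ↦ ha i)) ?_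
  have : Tendsto (fun n ↦ ‖(a n + 1)⁻¹‖) atTop (𝓝 0) := by
    simpa using (tendsto_inv₀_cobounded.comp ((tendsto_add_const_cobounded 1).comp h)).norm
  refine this.congr fun n ↦ ?_
  have hP : ∏ i ∈ range n, (a i + 1) ≠ 0 := prod_ne_zero_iff.2 fun i _ ↦ ha i
  rw [prod_range_succ, mul_inv, norm_mul,
    mul_div_cancel_left₀ _ (norm_ne_zero_iff.2 (inv_ne_zero hP))]

theorem hasSum_div_prod_range_succ_add_one [CompleteSpace 𝕜] {a : ℕ → 𝕜}
    (ha : ∀ i, a i + 1 ≠ 0) (h : Tendsto a atTop (cobounded 𝕜)) :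
    HasSum (fun n ↦ a n / ∏ i ∈ range (n + 1), (a i + 1)) 1 := by
  simp_rw [div_prod_range_succ_add_one_eq_inv_sub_inv ha]
  simpa using (summable_inv_prod_range_add_one ha h).hasSum_sub_succ

end

theorem tendsto_two_pow_mul_cobounded {s : ℂ} (hs : s ≠ 0) :
    Tendsto (fun n : ℕ ↦ (2 : ℂ) ^ n * s) atTop (cobounded ℂ) := by
  rw [← tendsto_norm_atTop_iff_cobounded]
  simp only [norm_mul, norm_pow, Complex.norm_ofNat]
  exact (tendsto_pow_atTop_atTop_of_one_lt one_lt_two).atTop_mul_const (norm_pos_iff.2 hs)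

theorem telescoping_sum_eq_one (s : ℂ) (hs0 : s ≠ 0)
    (hs : ∀ i : ℕ, (2 : ℂ) ^ i * s + 1 ≠ 0) :
    HasSum
      (fun j : ℕ => (2 : ℂ) ^ j * s / ∏ i ∈ Finset.range (j + 1), ((2 : ℂ) ^ i * s + 1))
      1 :=
  hasSum_div_prod_range_succ_add_one hs (tendsto_two_pow_mul_cobounded hs0)
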